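/- arXiv:1412.0310 — 2 statements merged into one kernel-verified Lean document; each statement's English description precedes it below -/
import Mathlib

section
/- Let p > q ≥ 2 be integers, r = gcd(p−1, q−1), m = (p−1)(q+1)/(2r), n = (p+1)(q−1)/(2r), A = 1/p^{1/(p−1)}, B = 1/q^{1/(q−1)}, C₀ = ((p−1)B)/((q−1)A), c ∈ ℝ, ε ∈ {1, −1}, and T(θ, s) = ε·s·sin(nθ + c) + C₀·sin(mθ). Then for every s > 0, (p+1)(q−1)/r ≤ Set.ncard {θ ∈ [0, 2π) | T(θ, s) = 0} ≤ (p−1)(q+1)/r. -/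
/-!
Write `N = 2n`, `M = 2m` and `d = m - n`; here `N = (p+1)(q-1)/r`, `M = (p-1)(q+1)/r` and
`d = (p-q)/r` are positive integers with `M = N + 2d`, and `T(·, s)` is
`a sin(nθ + c) + b sin(mθ)` with `a = εs ≠ 0`, `b = C₀ ≠ 0`.

Upper bound: with `z = e^{iθ}`, `2i e^{imθ} T(θ)` is the value at `z` of the nonzero polynomial
`b z^M + a e^{ic} z^{N+d} - a e^{-ic} z^d - b` of degree `M`, and `θ ↦ e^{iθ}` is injective on
`[0, 2π)`, so there are at most `M` zeros.

Lower bound: at a zero of `sin(mθ)`, `T(θ) = a sin(nθ + c)`. Since `π/m < π/n`, each of the `N`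
consecutive intervals on which `sin(nθ + c)` has constant sign contains a zero of `sin(mθ)`, so `T`
changes sign `N` times within a window of length `2π`. The intermediate value theorem gives `N`
zeros there, and they can be moved into `[0, 2π)` because `T(θ + 2π) = ±T(θ)`.
-/

open Real Set Polynomial
open Complex (I)
open scoped Complex

lemma exists_mem_Ioo_eq_zero_of_mul_neg {f : ℝ → ℝ} {a b : ℝ} (hab : a ≤ b)
    (hf : ContinuousOn f (Icc a b)) (h : f a * f b < 0) : ∃ x ∈ Ioo a b, f x = 0 := by
  rcases mul_neg_iff.1 h with ⟨ha, hb⟩ | ⟨ha, hb⟩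
  · exact intermediate_value_Ioo' hab hf ⟨hb, ha⟩
  · exact intermediate_value_Ioo hab hf ⟨ha, hb⟩

lemma le_encard_zeros_of_mul_neg {f : ℝ → ℝ} (hf : Continuous f) {u : ℕ → ℝ} (hu : Monotone u)
    (h : ∀ j, f (u j) * f (u (j + 1)) < 0) (N : ℕ) :
    (N : ℕ∞) ≤ {x ∈ Ico (u 0) (u N) | f x = 0}.encard := by
  choose x hx hx0 using fun j ↦
    exists_mem_Ioo_eq_zero_of_mul_neg (hu j.le_succ) hf.continuousOn (h j)
  have hx_mono : StrictMono x := strictMono_nat_of_lt_succ fun j ↦ (hx j).2.trans (hx (j + 1)).1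
  calc (N : ℕ∞) = (x '' (Finset.range N : Set ℕ)).encard := by
        rw [hx_mono.injective.encard_image, encard_coe_eq_coe_finsetCard, Finset.card_range]
    _ ≤ _ := by
      refine encard_le_encard (image_subset_iff.2 fun j hj ↦ ⟨⟨?_, ?_⟩, hx0 j⟩)
      · exact (hu j.zero_le).trans (hx j).1.le
      · exact (hx j).2.trans_le (hu (Finset.mem_range.1 hj))

lemma encard_zeros_Ico_eq_of_periodic {f : ℝ → ℝ} {L : ℝ} (hL : 0 < L)
    (hf : ∀ x, f (x + L) = 0 ↔ f x = 0) (a b : ℝ) :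
    {x ∈ Ico a (a + L) | f x = 0}.encard = {x ∈ Ico b (b + L) | f x = 0}.encard := by
  have hper : Function.Periodic (fun x ↦ f x = 0) L := fun x ↦ propext (hf x)
  have hinj : InjOn (toIcoMod hL b) (Ico a (a + L)) := fun x hx y hy hxy ↦ by
    rw [← (toIcoMod_eq_self hL).2 hx, ← (toIcoMod_eq_self hL).2 hy, ← toIcoMod_toIcoMod hL a b x,
      hxy, toIcoMod_toIcoMod]
  rw [← (hinj.mono (sep_subset _ _)).encard_image]
  congr 1
  ext y
  constructor
  · rintro ⟨x, ⟨-, hx⟩, rfl⟩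
    exact ⟨toIcoMod_mem_Ico hL b x, (hper.sub_zsmul_eq _).mpr hx⟩
  · rintro ⟨hy, hy0⟩
    refine ⟨toIcoMod hL a y, ⟨toIcoMod_mem_Ico hL a y, (hper.sub_zsmul_eq _).mpr hy0⟩, ?_⟩
    rw [toIcoMod_toIcoMod, (toIcoMod_eq_self hL).2 hy]

lemma encard_zeros_le_natDegree_of_eval_exp {f : ℝ → ℝ} {Q : ℂ[X]} (hQ : Q ≠ 0)
    (hf : ∀ θ, f θ = 0 → Q.eval (cexp (θ * I)) = 0) {a b : ℝ} (hab : b - a ≤ 2 * π) :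
    {θ ∈ Ico a b | f θ = 0}.encard ≤ Q.natDegree := by
  have hinj : InjOn (fun θ : ℝ ↦ cexp (θ * I)) (Ico a b) :=
    Subtype.val_injective.comp_injOn (Circle.exp_injOn_Ico hab)
  calc _ = ((fun θ : ℝ ↦ cexp (θ * I)) '' {θ ∈ Ico a b | f θ = 0}).encard :=
        ((hinj.mono (sep_subset _ _)).encard_image).symm
    _ ≤ (Q.rootSet ℂ).encard :=
        encard_le_encard <| image_subset_iff.2 fun θ hθ ↦
          mem_rootSet.2 ⟨hQ, by simpa using hf θ hθ.2⟩
    _ = (Q.rootSet ℂ).ncard := (Q.rootSet_finite ℂ).cast_ncard_eq.symm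
    _ ≤ Q.natDegree := mod_cast Q.ncard_rootSet_le ℂ

lemma neg_one_pow_mul_sin_pos {x : ℝ} (j : ℕ) (hx : x ∈ Ioo (j * π) (j * π + π)) :
    0 < (-1 : ℝ) ^ j * sin x := by
  have hsin : sin x = (-1) ^ j * sin (x - j * π) := by
    rw [← sin_add_nat_mul_pi, sub_add_cancel]
  rw [hsin, ← mul_assoc, ← pow_add, Even.neg_one_pow ⟨j, rfl⟩, one_mul]
  exact sin_pos_of_pos_of_lt_pi (by linarith [hx.1]) (by linarith [hx.2])

lemma sin_mul_add_two_pi_add {N : ℕ} {n : ℝ} (hN : (N : ℝ) = 2 * n) (x θ : ℝ) :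
    sin (n * (θ + 2 * π) + x) = (-1) ^ N * sin (n * θ + x) := by
  rw [← sin_add_nat_mul_pi, hN]
  ring_nf

lemma two_mul_I_mul_ofReal_sin (x : ℝ) :
    2 * I * Real.sin x = cexp (x * I) - (cexp (x * I))⁻¹ := by
  rw [Complex.ofReal_sin, ← Complex.exp_neg, Complex.sin]
  field_simp
  rw [Complex.I_sq]
  ring_nf

noncomputable def nextZeroSin (ω x : ℝ) : ℝ := (⌊x * ω / π⌋ + 1) * (π / ω)

section nextZeroSin

variable {ω : ℝ} (hω : 0 < ω) (x : ℝ)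
include hω

lemma lt_nextZeroSin : x < nextZeroSin ω x := by
  have h := Int.lt_floor_add_one (x * ω / π)
  calc x = x * ω / π * (π / ω) := by field_simp
    _ < _ := mul_lt_mul_of_pos_right h (by positivity)

lemma nextZeroSin_le : nextZeroSin ω x ≤ x + π / ω := by
  have h := Int.floor_le (x * ω / π)
  calc nextZeroSin ω x ≤ (x * ω / π + 1) * (π / ω) :=
        mul_le_mul_of_nonneg_right (by linarith) (by positivity)
    _ = x + π / ω := by field_simp

lemma sin_mul_nextZeroSin : sin (ω * nextZeroSin ω x) = 0 := by
  rw [nextZeroSin, mul_comm, mul_assoc, div_mul_cancel₀ _ hω.ne']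
  exact_mod_cast sin_int_mul_pi (⌊x * ω / π⌋ + 1)

lemma nextZeroSin_add_nat_mul (k : ℕ) :
    nextZeroSin ω (x + k * (π / ω)) = nextZeroSin ω x + k * (π / ω) := by
  have h : (x + k * (π / ω)) * ω / π = x * ω / π + k := by field_simp
  rw [nextZeroSin, nextZeroSin, h, Int.floor_add_natCast]
  push_cast
  ring

end nextZeroSin

noncomputable def trigSumPoly (a b c : ℝ) (N d : ℕ) : ℂ[X] :=
  C (b : ℂ) * X ^ (N + 2 * d) + C (a * cexp (c * I)) * X ^ (N + d)
    - C (a * (cexp (c * I))⁻¹) * X ^ d - C (b : ℂ)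

lemma natDegree_trigSumPoly_le (a b c : ℝ) (N d : ℕ) :
    (trigSumPoly a b c N d).natDegree ≤ N + 2 * d := by
  unfold trigSumPoly
  compute_degree
  all_goals omega

lemma trigSumPoly_ne_zero {a b c : ℝ} {N d : ℕ} (hb : b ≠ 0) (hd : 0 < d) :
    trigSumPoly a b c N d ≠ 0 := by
  intro h
  have hcoeff := congrArg (coeff · (N + 2 * d)) h
  simp only [trigSumPoly, coeff_add, coeff_sub, coeff_C_mul_X_pow, coeff_C,
    if_neg (show N + 2 * d ≠ N + d by omega), if_neg (show N + 2 * d ≠ d by omega),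
    if_neg (show N + 2 * d ≠ 0 by omega)] at hcoeff
  exact hb (by simpa using hcoeff)

section trigSum

variable {a b c m n : ℝ} {N d : ℕ} (hN : (N : ℝ) = 2 * n) (hd : (d : ℝ) = m - n)
include hN hd

lemma trigSum_add_two_pi (θ : ℝ) :
    a * sin (n * (θ + 2 * π) + c) + b * sin (m * (θ + 2 * π))
      = (-1) ^ N * (a * sin (n * θ + c) + b * sin (m * θ)) := by
  have hM : ((N + 2 * d : ℕ) : ℝ) = 2 * m := by push_cast; linarith
  have h := sin_mul_add_two_pi_add hM 0 θ
  rw [pow_add, pow_mul, neg_one_sq, one_pow, mul_one] at h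
  simp only [add_zero] at h
  rw [sin_mul_add_two_pi_add hN, h]
  ring

lemma eval_trigSumPoly (θ : ℝ) :
    (trigSumPoly a b c N d).eval (cexp (θ * I))
      = cexp (m * θ * I) * (2 * I * (a * sin (n * θ + c) + b * sin (m * θ) : ℝ)) := by
  set w := cexp (θ / 2 * I)
  have hpow : ∀ (k : ℕ) (t : ℝ), (k : ℝ) = 2 * t → cexp (t * θ * I) = w ^ k := fun k t hk ↦ by
    rw [← Complex.exp_nat_mul]
    congr 1
    rw [show (k : ℂ) = ((k : ℝ) : ℂ) by norm_cast, hk]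
    push_cast
    ring
  have hz : cexp (θ * I) = w ^ 2 := by simpa using hpow 2 1 (by norm_num)
  have hn : cexp ((n * θ + c) * I) = w ^ N * cexp (c * I) := by
    rw [← hpow N n hN, ← Complex.exp_add]
    ring_nf
  have hm : cexp (m * θ * I) = w ^ (N + 2 * d) := hpow _ m (by push_cast; linarith)
  have hw : w ≠ 0 := Complex.exp_ne_zero _
  have he : cexp (c * I) ≠ 0 := Complex.exp_ne_zero _
  rw [Complex.ofReal_add, Complex.ofReal_mul, Complex.ofReal_mul, mul_add,
    mul_left_comm _ (a : ℂ), mul_left_comm _ (b : ℂ), two_mul_I_mul_ofReal_sin,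
    two_mul_I_mul_ofReal_sin]
  push_cast
  rw [hn, hm, trigSumPoly]
  simp only [eval_sub, eval_add, eval_mul, eval_C, eval_pow, eval_X, hz]
  field_simp
  ring

lemma encard_zeros_trigSum_le (hb : b ≠ 0) (hd0 : 0 < d) :
    {θ ∈ Ico 0 (2 * π) | a * sin (n * θ + c) + b * sin (m * θ) = 0}.encard
      ≤ (N + 2 * d : ℕ) := by
  have h := encard_zeros_le_natDegree_of_eval_exp
    (f := fun θ ↦ a * sin (n * θ + c) + b * sin (m * θ)) (trigSumPoly_ne_zero hb hd0)
    (fun θ hθ ↦ by rw [eval_trigSumPoly hN hd, hθ]; simp) (a := 0) (b := 2 * π) (by simp)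
  exact h.trans (mod_cast natDegree_trigSumPoly_le a b c N d)

lemma exists_sin_mul_eq_zero_sign_alternating (c : ℝ) (hN0 : 0 < N) (hd0 : 0 < d) :
    ∃ ζ : ℕ → ℝ, StrictMono ζ ∧ ζ N = ζ 0 + 2 * π ∧
      ∀ j, sin (m * ζ j) = 0 ∧ 0 < (-1 : ℝ) ^ j * sin (n * ζ j + c) := by
  have hn : 0 < n := by linarith [show (0 : ℝ) < N from mod_cast hN0]
  have hnm : n < m := by linarith [show (0 : ℝ) < d from mod_cast hd0]
  have hm : 0 < m := hn.trans hnm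
  -- `φ j` is the `j`-th zero of `sin (n θ + c)`; `ζ j` the next zero of `sin (m θ)` after it.
  set φ : ℕ → ℝ := fun j ↦ (j * π - c) / n
  have hnφ : ∀ j, n * φ j + c = j * π := fun j ↦ by simp only [φ]; field_simp; ring
  have hφ_add : ∀ j k : ℕ, φ (j + k) = φ j + k * (π / n) := fun j k ↦ by
    simp only [φ]; push_cast; field_simp; ring
  set ζ : ℕ → ℝ := fun j ↦ nextZeroSin m (φ j)
  have hζ_lt : ∀ j, ζ j < φ (j + 1) := fun j ↦ by
    have : π / m < π / n := div_lt_div_of_pos_left pi_pos hn hnm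
    have := nextZeroSin_le hm (φ j)
    rw [hφ_add, Nat.cast_one, one_mul]
    linarith
  refine ⟨ζ, strictMono_nat_of_lt_succ fun j ↦ (hζ_lt j).trans (lt_nextZeroSin hm _), ?_,
    fun j ↦ ⟨sin_mul_nextZeroSin hm _, ?_⟩⟩
  · have hn_period : N * (π / n) = 2 * π := by rw [hN]; field_simp
    have hm_period : ((N + 2 * d : ℕ) : ℝ) * (π / m) = 2 * π := by
      simp only [Nat.cast_add, Nat.cast_mul, Nat.cast_ofNat, hN, hd]
      field_simp
      ring
    simp only [ζ]
    rw [← zero_add N, hφ_add, hn_period, ← hm_period, nextZeroSin_add_nat_mul hm]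
  · have h1 := mul_lt_mul_of_pos_left (lt_nextZeroSin hm (φ j)) hn
    have h2 := mul_lt_mul_of_pos_left (hζ_lt j) hn
    have h3 := hnφ (j + 1)
    push_cast at h3
    exact neg_one_pow_mul_sin_pos j ⟨by linarith [hnφ j], by linarith⟩

lemma le_encard_zeros_trigSum (ha : a ≠ 0) (hd0 : 0 < d) :
    (N : ℕ∞) ≤ {θ ∈ Ico 0 (2 * π) | a * sin (n * θ + c) + b * sin (m * θ) = 0}.encard := by
  obtain rfl | hN0 := N.eq_zero_or_pos
  · simp
  obtain ⟨ζ, hζ_mono, hζ_N, hζ⟩ := exists_sin_mul_eq_zero_sign_alternating hN hd c hN0 hd0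
  set F := fun θ ↦ a * sin (n * θ + c) + b * sin (m * θ)
  have hchange : ∀ j, F (ζ j) * F (ζ (j + 1)) < 0 := fun j ↦ by
    have hsq : ((-1 : ℝ) ^ j) ^ 2 = 1 := by rw [← pow_mul, pow_mul', neg_one_sq, one_pow]
    have h := mul_pos (hζ j).2 (hζ (j + 1)).2
    rw [pow_succ] at h
    simp only [F, (hζ _).1, mul_zero, add_zero]
    nlinarith [sq_pos_of_ne_zero ha]
  calc (N : ℕ∞) ≤ {θ ∈ Ico (ζ 0) (ζ N) | F θ = 0}.encard :=
        le_encard_zeros_of_mul_neg (by fun_prop) hζ_mono.monotone hchange N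
    _ = {θ ∈ Ico 0 (0 + 2 * π) | F θ = 0}.encard := by
      rw [hζ_N]
      refine encard_zeros_Ico_eq_of_periodic two_pi_pos (fun θ ↦ ?_) _ _
      simp [F, trigSum_add_two_pi hN hd]
    _ = _ := by rw [zero_add]

lemma ncard_zeros_trigSum_bounds (ha : a ≠ 0) (hb : b ≠ 0) (hd0 : 0 < d) :
    N ≤ {θ ∈ Ico 0 (2 * π) | a * sin (n * θ + c) + b * sin (m * θ) = 0}.ncard ∧
      {θ ∈ Ico 0 (2 * π) | a * sin (n * θ + c) + b * sin (m * θ) = 0}.ncard ≤ N + 2 * d := by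
  have hup := encard_zeros_trigSum_le hN hd (a := a) (c := c) hb hd0
  have hlow := le_encard_zeros_trigSum hN hd (b := b) (c := c) ha hd0
  have hfin := finite_of_encard_le_coe hup
  rw [← hfin.cast_ncard_eq] at hup hlow
  exact ⟨mod_cast hlow, mod_cast hup⟩

end trigSum

lemma cast_div_of_dvd_sub_one {p q r : ℕ} (hq : 1 ≤ q) (hpq : q ≤ p) (hr : r ≠ 0)
    (hrp : r ∣ p - 1) (hrq : r ∣ q - 1) :
    (((p + 1) * (q - 1) / r : ℕ) : ℝ) = ((p : ℝ) + 1) * ((q : ℝ) - 1) / r ∧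
      (((p - 1) * (q + 1) / r : ℕ) : ℝ) = ((p : ℝ) - 1) * ((q : ℝ) + 1) / r ∧
      (((p - q) / r : ℕ) : ℝ) = ((p : ℝ) - q) / r := by
  have hrpq : r ∣ p - q := by
    simpa [show p - 1 - (q - 1) = p - q by omega] using Nat.dvd_sub hrp hrq
  have hr' : (r : ℝ) ≠ 0 := mod_cast hr
  refine ⟨?_, ?_, ?_⟩
  · rw [Nat.cast_div (hrq.mul_left _) hr', Nat.cast_mul, Nat.cast_sub hq]
    push_cast
    ring
  · rw [Nat.cast_div (hrp.mul_right _) hr', Nat.cast_mul, Nat.cast_sub (hq.trans hpq)]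
    push_cast
    ring
  · rw [Nat.cast_div hrpq hr', Nat.cast_sub hpq]

/-- for `p > q` and every `s > 0`, the number of zeros of `T(θ, s)` in
`[0, 2π)` lies between `(p+1)(q-1)/r` and `(p-1)(q+1)/r`. -/
theorem number_of_zeros_bounds
    (p q : ℕ) (hq : 2 ≤ q) (hpq : q < p)
    (r : ℕ) (hr : r = Nat.gcd (p - 1) (q - 1))
    (m n : ℝ)
    (hm : m = ((p : ℝ) - 1) * ((q : ℝ) + 1) / (2 * r))
    (hn : n = ((p : ℝ) + 1) * ((q : ℝ) - 1) / (2 * r))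
    (A B : ℝ)
    (hA : A = 1 / (p : ℝ) ^ ((1 : ℝ) / ((p : ℝ) - 1)))
    (hB : B = 1 / (q : ℝ) ^ ((1 : ℝ) / ((q : ℝ) - 1)))
    (C₀ : ℝ) (hC₀ : C₀ = ((p : ℝ) - 1) * B / (((q : ℝ) - 1) * A))
    (c : ℝ) (ε : ℝ) (hε : ε = 1 ∨ ε = -1)
    (T : ℝ → ℝ → ℝ)
    (hT : ∀ θ s : ℝ, T θ s = ε * s * Real.sin (n * θ + c) + C₀ * Real.sin (m * θ)) :
    ∀ s : ℝ, 0 < s →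
      (p + 1) * (q - 1) / r
          ≤ ({θ ∈ Set.Ico (0 : ℝ) (2 * Real.pi) | T θ s = 0}).ncard ∧
      ({θ ∈ Set.Ico (0 : ℝ) (2 * Real.pi) | T θ s = 0}).ncard
          ≤ (p - 1) * (q + 1) / r := by
  intro s hs
  have hr0 : 0 < r := hr ▸ Nat.gcd_pos_of_pos_right _ (by omega)
  obtain ⟨hcastN, hcastM, hcastd⟩ := cast_div_of_dvd_sub_one (by omega) hpq.le hr0.ne'
    (hr ▸ Nat.gcd_dvd_left _ _) (hr ▸ Nat.gcd_dvd_right _ _)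
  have hp1 : (1 : ℝ) < p := mod_cast (by omega : 1 < p)
  have hpqR : (q : ℝ) < p := mod_cast hpq
  have hq1 : (1 : ℝ) < q := mod_cast (by omega : 1 < q)
  have hN : (((p + 1) * (q - 1) / r : ℕ) : ℝ) = 2 * n := by rw [hcastN, hn]; field_simp
  have hd : (((p - q) / r : ℕ) : ℝ) = m - n := by rw [hcastd, hm, hn]; field_simp; ring
  have hM : (p - 1) * (q + 1) / r = (p + 1) * (q - 1) / r + 2 * ((p - q) / r) := by
    have h2m : (((p - 1) * (q + 1) / r : ℕ) : ℝ) = 2 * m := by rw [hcastM, hm]; field_simp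
    exact Nat.cast_injective (R := ℝ) (by push_cast; linarith)
  have hd0 : 0 < (p - q) / r := by
    have h : (0 : ℝ) < ((p - q) / r : ℕ) := hcastd ▸ div_pos (by linarith) (by positivity)
    exact_mod_cast h
  have hC₀0 : C₀ ≠ 0 := by
    have hA0 : 0 < A := hA ▸ div_pos one_pos (rpow_pos_of_pos (by linarith) _)
    have hB0 : 0 < B := hB ▸ div_pos one_pos (rpow_pos_of_pos (by linarith) _)
    exact hC₀ ▸ (div_pos (mul_pos (by linarith) hB0) (mul_pos (by linarith) hA0)).ne'
  have hεs : ε * s ≠ 0 := mul_ne_zero (by rcases hε with rfl | rfl <;> norm_num) hs.ne'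
  simp only [hT]
  rw [hM]
  exact ncard_zeros_trigSum_bounds hN hd hεs hC₀0 hd0
end

section
/- The map h : ℝ → ℂ, h(θ) = e^{2iθ} + 2e^{−iθ}, is injective on [0, 2π): for all θ₁, θ₂ ∈ [0, 2π), if h(θ₁) = h(θ₂) then θ₁ = θ₂. -/
open Complex ComplexConjugate

/- Writing `a = e^{iθ₁}`, `b = e^{iθ₂}`, the equation `h θ₁ = h θ₂` reads
`a² + 2ā = b² + 2b̄`, i.e. `(a + b)(a - b) = -2 (a - b)‾`. If `a ≠ b`, taking norms gives
`‖a + b‖ = 2 = ‖a‖ + ‖b‖`, which on the unit circle (strict convexity) forces `a = b`.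
Finally `θ ↦ e^{iθ}` is injective on `[0, 2π)`. -/

theorem Complex.eq_of_sq_add_two_conj_eq {a b : ℂ} (ha : ‖a‖ = 1) (hb : ‖b‖ = 1)
    (hab : a ^ 2 + 2 * conj a = b ^ 2 + 2 * conj b) : a = b := by
  by_contra hne
  have hsub : a - b ≠ 0 := sub_ne_zero.mpr hne
  have hfactor : (a + b) * (a - b) = -2 * conj (a - b) := by
    rw [map_sub]; linear_combination hab
  have hnorm : ‖a + b‖ * ‖a - b‖ = 2 * ‖a - b‖ := by
    simpa only [norm_mul, norm_neg, Complex.norm_conj, Complex.norm_ofNat] using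
      congrArg norm hfactor
  have hsum : ‖a + b‖ = ‖a‖ + ‖b‖ := by
    rw [ha, hb, mul_right_cancel₀ (norm_ne_zero_iff.mpr hsub) hnorm]; norm_num
  exact hne ((sameRay_iff_norm_add.mpr hsum).eq_of_norm_eq (ha.trans hb.symm))

theorem Complex.exp_two_mul_I_add_two_exp_neg_I (θ : ℝ) :
    cexp (2 * I * θ) + 2 * cexp (-(I * θ)) =
      (Circle.exp θ : ℂ) ^ 2 + 2 * conj (Circle.exp θ : ℂ) := by
  rw [Circle.coe_exp, ← exp_conj, ← exp_nat_mul]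
  simp only [map_mul, conj_ofReal, conj_I]
  push_cast
  ring_nf

/-- the map `h(θ) = e^{2iθ} + 2e^{-iθ}` is injective on `[0, 2π)`. -/
theorem h_injective_on_period
    (h : ℝ → ℂ)
    (hh : ∀ θ : ℝ, h θ = Complex.exp (2 * Complex.I * (θ : ℂ))
      + 2 * Complex.exp (-(Complex.I * (θ : ℂ)))) :
    ∀ θ₁ ∈ Set.Ico (0 : ℝ) (2 * Real.pi), ∀ θ₂ ∈ Set.Ico (0 : ℝ) (2 * Real.pi),
      h θ₁ = h θ₂ → θ₁ = θ₂ := by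
  intro θ₁ hθ₁ θ₂ hθ₂ heq
  rw [hh, hh, exp_two_mul_I_add_two_exp_neg_I, exp_two_mul_I_add_two_exp_neg_I] at heq
  refine Circle.exp_injOn_Ico (by simp) hθ₁ hθ₂ (Circle.ext ?_)
  exact eq_of_sq_add_two_conj_eq (Circle.norm_coe _) (Circle.norm_coe _) heq
end
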